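/- Let 𝒳 be a finite alphabet with |𝒳| = M ≥ 2, let P(x̂|x) be the transition probabilities of a discrete memoryless channel with input and output alphabet 𝒳, assume uniform input, and let δ = (1/M)·Σ_{x∈𝒳} Σ_{x̂≠x} P(x̂|x). Let ε ∈ (0,1) and let q be the symbol-wise Hamming mismatched decoding metric with parameter ε. Then for every s > 0, the generalized mutual information admits the closed form I(s) = log₂ M − (1−δ)·log₂( 1 + ε^s·(M−1)^{1−s}·(1−ε)^{−s} ) − δ·log₂( M−1 + (1−ε)^s·ε^{−s}·(M−1)^{s} ); in particular I(s) depends on the channel only through δ. -/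

import Mathlib

/-!
The Hamming metric takes one value on the diagonal and one off it, so the normaliser
`∑ x', q(x̂, x')^s = (1-ε)^s + (M-1)(ε/(M-1))^s` does not depend on `x̂`, and the log-ratio
inside the GMI is likewise one constant for correct and one for erroneous symbols. Averaging
over a channel whose columns sum to one weighs these two constants by `1 - δ` and `δ`.
-/

open Finset

section

variable {𝒳 : Type*} [Fintype 𝒳] [DecidableEq 𝒳]

noncomputable def symbolErrorProb (P : 𝒳 → 𝒳 → ℝ) : ℝ :=
  (1 / (Fintype.card 𝒳 : ℝ)) * ∑ x, ∑ y ∈ univ.filter (fun y => y ≠ x), P y x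

theorem sum_ite_eq_add_card_sub_one_mul (y : 𝒳) (a b : ℝ) :
    ∑ x, (if y = x then a else b) = a + ((Fintype.card 𝒳 : ℝ) - 1) * b := by
  rw [← add_sum_erase _ _ (mem_univ y), if_pos rfl,
    sum_congr rfl fun x hx => if_neg (ne_of_mem_erase hx).symm, sum_const,
    card_erase_of_mem (mem_univ y), card_univ, nsmul_eq_mul,
    Nat.cast_sub (Fintype.card_pos_iff.mpr ⟨y⟩), Nat.cast_one]

theorem average_sum_mul_ite_eq [Nonempty 𝒳] (P : 𝒳 → 𝒳 → ℝ) (hPsum : ∀ x, ∑ y, P y x = 1)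
    (A B : ℝ) :
    (1 / (Fintype.card 𝒳 : ℝ)) * ∑ x, ∑ y, P y x * (if y = x then A else B)
      = (1 - symbolErrorProb P) * A + symbolErrorProb P * B := by
  have hcol : ∀ x, ∑ y, P y x * (if y = x then A else B)
      = A + (∑ y ∈ univ.filter (fun y => y ≠ x), P y x) * (B - A) := by
    intro x
    have hdiag : P x x = 1 - ∑ y ∈ univ.filter (fun y => y ≠ x), P y x := by
      rw [← hPsum x, filter_ne', ← add_sum_erase _ _ (mem_univ x)]
      ring
    simp only [mul_ite, sum_ite, filter_eq', if_pos (mem_univ x), sum_singleton, ← sum_mul, hdiag]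
    ring
  have hcard : (Fintype.card 𝒳 : ℝ) ≠ 0 := Nat.cast_ne_zero.mpr Fintype.card_ne_zero
  simp only [hcol, sum_add_distrib, sum_const, card_univ, nsmul_eq_mul, ← sum_mul,
    symbolErrorProb]
  field_simp
  ring

theorem average_sum_mul_logb_ite_metric [Nonempty 𝒳] (P : 𝒳 → 𝒳 → ℝ)
    (hPsum : ∀ x, ∑ y, P y x = 1) (c d s : ℝ) :
    (1 / (Fintype.card 𝒳 : ℝ)) * ∑ x, ∑ y, P y x * Real.logb 2 ((Fintype.card 𝒳 : ℝ) *
        (if y = x then c else d) ^ s / ∑ x', (if y = x' then c else d) ^ s)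
      = (1 - symbolErrorProb P) * Real.logb 2
          ((Fintype.card 𝒳 : ℝ) * c ^ s / (c ^ s + ((Fintype.card 𝒳 : ℝ) - 1) * d ^ s))
        + symbolErrorProb P * Real.logb 2
          ((Fintype.card 𝒳 : ℝ) * d ^ s / (c ^ s + ((Fintype.card 𝒳 : ℝ) - 1) * d ^ s)) := by
  simp only [apply_ite (· ^ s), sum_ite_eq_add_card_sub_one_mul,
    apply_ite fun t => Real.logb 2
      ((Fintype.card 𝒳 : ℝ) * t / (c ^ s + ((Fintype.card 𝒳 : ℝ) - 1) * d ^ s))]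
  exact average_sum_mul_ite_eq P hPsum _ _

end

theorem Real.logb_mul_div_eq_sub_logb_div {b m a S : ℝ} (hm : 0 < m) (ha : 0 < a) (hS : 0 < S) :
    Real.logb b (m * a / S) = Real.logb b m - Real.logb b (S / a) := by
  rw [← Real.logb_div hm.ne' (div_pos hS ha).ne', div_div_eq_mul_div]

theorem hamming_normalizer_div_rpow_one_sub {m ε : ℝ} (hm : 1 < m) (hε0 : 0 < ε)
    (hε1 : ε < 1) (s : ℝ) :
    ((1 - ε) ^ s + (m - 1) * (ε / (m - 1)) ^ s) / (1 - ε) ^ s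
      = 1 + ε ^ s * (m - 1) ^ (1 - s) * (1 - ε) ^ (-s) := by
  have hm1 : 0 < m - 1 := sub_pos.mpr hm
  have h1ε : 0 < 1 - ε := sub_pos.mpr hε1
  rw [Real.div_rpow hε0.le hm1.le, Real.rpow_neg h1ε.le, Real.rpow_sub hm1, Real.rpow_one]
  have : 0 < (1 - ε) ^ s := Real.rpow_pos_of_pos h1ε s
  have : 0 < (m - 1) ^ s := Real.rpow_pos_of_pos hm1 s
  field_simp

theorem hamming_normalizer_div_rpow_div {m ε : ℝ} (hm : 1 < m) (hε0 : 0 < ε) (s : ℝ) :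
    ((1 - ε) ^ s + (m - 1) * (ε / (m - 1)) ^ s) / (ε / (m - 1)) ^ s
      = (m - 1) + (1 - ε) ^ s * ε ^ (-s) * (m - 1) ^ s := by
  have hm1 : 0 < m - 1 := sub_pos.mpr hm
  rw [Real.div_rpow hε0.le hm1.le, Real.rpow_neg hε0.le]
  have : 0 < ε ^ s := Real.rpow_pos_of_pos hε0 s
  have : 0 < (m - 1) ^ s := Real.rpow_pos_of_pos hm1 s
  field_simp
  ring

theorem stmt4_general {𝒳 : Type*} [Fintype 𝒳] [DecidableEq 𝒳]
    (M : ℕ) (hM : 2 ≤ M) (hcard : Fintype.card 𝒳 = M)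
    (P : 𝒳 → 𝒳 → ℝ)
    (hPsum : ∀ x, ∑ y, P y x = 1)
    (δ : ℝ)
    (hδ : δ = (1 / (M : ℝ)) * ∑ x, ∑ y ∈ univ.filter (fun y => y ≠ x), P y x)
    (ε : ℝ) (hε : ε ∈ Set.Ioo (0 : ℝ) 1)
    (q : 𝒳 → 𝒳 → ℝ)
    (hq : ∀ y x, q y x = if y = x then 1 - ε else ε / ((M : ℝ) - 1))
    (I : ℝ → ℝ)
    (hI : ∀ s : ℝ, I s = (1 / (M : ℝ)) * ∑ x, ∑ y, P y x *
      Real.logb 2 ((M : ℝ) * (q y x) ^ s / ∑ x', (q y x') ^ s)) :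
    ∀ s : ℝ, 0 < s →
      I s = Real.logb 2 (M : ℝ)
        - (1 - δ) * Real.logb 2
            (1 + ε ^ s * ((M : ℝ) - 1) ^ (1 - s) * (1 - ε) ^ (-s))
        - δ * Real.logb 2
            (((M : ℝ) - 1) + (1 - ε) ^ s * ε ^ (-s) * ((M : ℝ) - 1) ^ s) := by
  intro s _
  subst hcard
  have : Nonempty 𝒳 := Fintype.card_pos_iff.mp (by omega)
  have hm : (1 : ℝ) < Fintype.card 𝒳 := by exact_mod_cast hM
  have hm1 : (0 : ℝ) < Fintype.card 𝒳 - 1 := sub_pos.mpr hm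
  have hc : 0 < (1 - ε) ^ s := Real.rpow_pos_of_pos (sub_pos.mpr hε.2) s
  have hd : 0 < (ε / ((Fintype.card 𝒳 : ℝ) - 1)) ^ s :=
    Real.rpow_pos_of_pos (div_pos hε.1 hm1) s
  have hS : 0 < (1 - ε) ^ s
      + ((Fintype.card 𝒳 : ℝ) - 1) * (ε / ((Fintype.card 𝒳 : ℝ) - 1)) ^ s :=
    add_pos hc (mul_pos hm1 hd)
  have hmpos : (0 : ℝ) < Fintype.card 𝒳 := by linarith
  rw [hI s, show δ = symbolErrorProb P from hδ]
  simp only [hq]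
  rw [average_sum_mul_logb_ite_metric P hPsum,
    Real.logb_mul_div_eq_sub_logb_div hmpos hc hS, Real.logb_mul_div_eq_sub_logb_div hmpos hd hS,
    hamming_normalizer_div_rpow_one_sub hm hε.1 hε.2, hamming_normalizer_div_rpow_div hm hε.1]
  ring

/-- For a DMC on an alphabet of size `M ≥ 2` with uniform input,
symbol error probability `δ`, and the symbol-wise Hamming mismatched metric with
parameter `ε ∈ (0,1)`, the GMI admits, for every `s > 0`, the closed form
`I(s) = log₂ M − (1−δ)·log₂(1 + ε^s (M−1)^{1−s} (1−ε)^{−s})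
             − δ·log₂(M−1 + (1−ε)^s ε^{−s} (M−1)^s)`;
in particular `I(s)` depends on the channel only through `δ`.
Here `P y x` denotes P(x̂ = y | x). -/
theorem stmt4 {𝒳 : Type*} [Fintype 𝒳] [DecidableEq 𝒳]
    (M : ℕ) (hM : 2 ≤ M) (hcard : Fintype.card 𝒳 = M)
    (P : 𝒳 → 𝒳 → ℝ)
    (hPnn : ∀ x y, 0 ≤ P y x)
    (hPsum : ∀ x, ∑ y, P y x = 1)
    (δ : ℝ)
    (hδ : δ = (1 / (M : ℝ)) * ∑ x, ∑ y ∈ univ.filter (fun y => y ≠ x), P y x)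
    (ε : ℝ) (hε : ε ∈ Set.Ioo (0 : ℝ) 1)
    (q : 𝒳 → 𝒳 → ℝ)
    (hq : ∀ y x, q y x = if y = x then 1 - ε else ε / ((M : ℝ) - 1))
    (I : ℝ → ℝ)
    (hI : ∀ s : ℝ, I s = (1 / (M : ℝ)) * ∑ x, ∑ y, P y x *
      Real.logb 2 ((M : ℝ) * (q y x) ^ s / ∑ x', (q y x') ^ s)) :
    ∀ s : ℝ, 0 < s →
      I s = Real.logb 2 (M : ℝ)
        - (1 - δ) * Real.logb 2
            (1 + ε ^ s * ((M : ℝ) - 1) ^ (1 - s) * (1 - ε) ^ (-s))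
        - δ * Real.logb 2
            (((M : ℝ) - 1) + (1 - ε) ^ s * ε ^ (-s) * ((M : ℝ) - 1) ^ s) :=
  stmt4_general M hM hcard P hPsum δ hδ ε hε q hq I hI
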